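/- Let H be a real separable Hilbert space, d ≥ 1 and 1 ≤ p < ∞, and let E ⊆ H. Then there is a constant C depending only on d (and p) such that for any ball B centred on E with 𝓗^d_∞(E ∩ B) > 0, β_E^{d,1}(B) ≤ C β_E^{d,p}(B). -/

import Mathlib

open Metric Set MeasureTheory
open scoped ENNReal NNReal Classical

noncomputable section

variable {H : Type*} [NormedAddCommGroup H] [InnerProductSpace ℝ H]

/-- A `d`-plane: a `d`-dimensional affine subspace of `H`. -/
def IsDPlane (d : ℕ) (P : Set H) : Prop :=
  ∃ (x : H) (W : Submodule ℝ H), Module.finrank ℝ W = d ∧ P = (fun w => x + w) '' (W : Set H)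

/-- `d`-dimensional Hausdorff content `𝓗^d_∞`. -/
def hContent (d : ℕ) (A : Set H) : ℝ≥0∞ :=
  ⨅ (t : ℕ → Set H) (_ : A ⊆ ⋃ n, t n), ∑' n, EMetric.diam (t n) ^ (d : ℝ)

/-- Normalized local Hausdorff distance between `E` and `F` relative to the ball `B(x,r)`. -/
def dBall (x : H) (r : ℝ) (E F : Set H) : ℝ :=
  r⁻¹ * max (⨆ y ∈ E ∩ closedBall x r, infDist y F) (⨆ y ∈ F ∩ closedBall x r, infDist y E)

/-- `β_E^{d,p}(B(x,r), P)`. -/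
def betaPl (d : ℕ) (p : ℝ) (E : Set H) (x : H) (r : ℝ) (P : Set H) : ℝ≥0∞ :=
  ((ENNReal.ofReal r ^ d)⁻¹ *
      ∫⁻ t in Ioo (0 : ℝ) 1,
        hContent d {y | y ∈ E ∩ closedBall x r ∧ t * r < infDist y P} *
          ENNReal.ofReal (t ^ (p - 1))) ^ (1 / p)

/-- `β_E^{d,p}(B(x,r))`: infimum of `β_E^{d,p}(B(x,r), P)` over all `d`-planes `P`. -/
def betaInf (d : ℕ) (p : ℝ) (E : Set H) (x : H) (r : ℝ) : ℝ≥0∞ :=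
  ⨅ (P : Set H) (_ : IsDPlane d P), betaPl d p E x r P

/-- Choquet integral of `f` over `A` against the Hausdorff content `𝓗^d_∞`. -/
def choquet (d : ℕ) (A : Set H) (f : H → ℝ) : ℝ≥0∞ :=
  ∫⁻ t in Ioi (0 : ℝ), hContent d {x | x ∈ A ∧ t < f x}

/-- Choquet integral of `f^p` over `A` against the Hausdorff content `𝓗^d_∞`. -/
def choquetPow (d : ℕ) (p : ℝ) (A : Set H) (f : H → ℝ) : ℝ≥0∞ :=
  ∫⁻ t in Ioi (0 : ℝ), hContent d {x | x ∈ A ∧ t < f x} * ENNReal.ofReal (t ^ (p - 1))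

/-- A Christ–David cube system for `E ⊆ H`, with parameters `c₀, ρ ∈ (0,1)`. A cube
`Q ∈ cubes k` has side length `ℓ(Q) = 5ρᵏ` and centre `center k Q`. -/
structure ChristDavid (E : Set H) where
  c₀ : ℝ
  ρ : ℝ
  c₀_pos : 0 < c₀
  c₀_lt_one : c₀ < 1
  ρ_pos : 0 < ρ
  ρ_lt_one : ρ < 1
  cubes : ℤ → Set (Set H)
  center : ℤ → Set H → H
  subset_E : ∀ k Q, Q ∈ cubes k → Q ⊆ E
  nested : ∀ k l Q R, Q ∈ cubes k → R ∈ cubes l → (Q ∩ R).Nonempty → Q ⊆ R ∨ R ⊆ Q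
  center_mem : ∀ k Q, Q ∈ cubes k → center k Q ∈ E
  ball_subset : ∀ k Q, Q ∈ cubes k →
    E ∩ closedBall (center k Q) (c₀ * (5 * ρ ^ k)) ⊆ Q
  subset_ball : ∀ k Q, Q ∈ cubes k → Q ⊆ closedBall (center k Q) (5 * ρ ^ k)
  covers : ∀ k, E ⊆ ⋃ Q ∈ cubes k, closedBall (center k Q) (5 * ρ ^ k)

namespace ChristDavid

variable {E : Set H}

/-- Sum of a quantity over all cubes of a Christ–David cube system. -/
def sumCubes (D : ChristDavid E) (F : ℤ → Set H → ℝ≥0∞) : ℝ≥0∞ :=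
  ∑' (k : ℤ), ∑' (Q : D.cubes k), F k (Q : Set H)

/-- `Q ∈ BWGL(A, ε)`: the set `E` is `ε`-far from every `d`-plane in `A B_Q`. -/
def inBWGL (D : ChristDavid E) (d : ℕ) (A ε : ℝ) (k : ℤ) (Q : Set H) : Prop :=
  ∀ P : Set H, IsDPlane d P → ε ≤ dBall (D.center k Q) (A * (5 * D.ρ ^ k)) E P

/-- `BWGL(Q₀, A, ε) = Σ { ℓ(R)^d : R ⊆ Q₀, R ∈ BWGL(A,ε) }`. -/
def bwglSum (D : ChristDavid E) (d : ℕ) (A ε : ℝ) (Q₀ : Set H) : ℝ≥0∞ :=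
  D.sumCubes fun k Q =>
    if Q ⊆ Q₀ ∧ D.inBWGL d A ε k Q then ENNReal.ofReal (5 * D.ρ ^ k) ^ d else 0

/-- `Σ_{Q ⊆ Q₀} β_E^{d,p}(C₀ B_Q)² ℓ(Q)^d`. -/
def betaSum (D : ChristDavid E) (d : ℕ) (p C₀ : ℝ) (Q₀ : Set H) : ℝ≥0∞ :=
  D.sumCubes fun k Q =>
    if Q ⊆ Q₀ then
      betaInf d p E (D.center k Q) (C₀ * (5 * D.ρ ^ k)) ^ 2 *
        ENNReal.ofReal (5 * D.ρ ^ k) ^ d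
    else 0

/-- `E` satisfies the bilateral weak geometric lemma. -/
def SatisfiesBWGL (D : ChristDavid E) (d : ℕ) : Prop :=
  ∀ A ε : ℝ, 1 ≤ A → 0 < ε → ∃ C : ℝ, 0 < C ∧
    ∀ (k₀ : ℤ), ∀ Q₀ ∈ D.cubes k₀,
      D.bwglSum d A ε Q₀ ≤ ENNReal.ofReal C * ENNReal.ofReal (5 * D.ρ ^ k₀) ^ d

end ChristDavid

/-- Lower content `d`-regularity with constant `c`. -/
def LowerContentRegular (d : ℕ) (c : ℝ) (E : Set H) : Prop :=
  ∀ x ∈ E, ∀ r : ℝ, 0 < r → ENNReal.ofReal r < EMetric.diam E →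
    ENNReal.ofReal (c * r ^ d) ≤ hContent d (E ∩ closedBall x r)

/-- Ahlfors `d`-regularity with constant `A₀`. -/
def AhlforsRegular [MeasurableSpace H] [BorelSpace H] (d : ℕ) (A₀ : ℝ) (E : Set H) : Prop :=
  ∀ x ∈ E, ∀ r : ℝ, 0 < r → ENNReal.ofReal r < EMetric.diam E →
    ENNReal.ofReal (r ^ d / A₀) ≤ μH[(d : ℝ)] (E ∩ closedBall x r) ∧
      μH[(d : ℝ)] (E ∩ closedBall x r) ≤ ENNReal.ofReal (A₀ * r ^ d)

/-- Uniform `d`-rectifiability: Ahlfors `d`-regularity together with big pieces of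
Lipschitz images of `ℝ^d`. -/
def UniformlyRectifiable [MeasurableSpace H] [BorelSpace H] (d : ℕ) (E : Set H) : Prop :=
  (∃ A₀ : ℝ, 1 ≤ A₀ ∧ AhlforsRegular d A₀ E) ∧
    ∃ L θ : ℝ, 0 < L ∧ 0 < θ ∧
      ∀ x ∈ E, ∀ r : ℝ, 0 < r → ENNReal.ofReal r < EMetric.diam E →
        ∃ f : EuclideanSpace ℝ (Fin d) → H,
          LipschitzWith (Real.toNNReal L) f ∧
            ENNReal.ofReal (θ * r ^ d) ≤
              μH[(d : ℝ)] (E ∩ closedBall x r ∩ f '' closedBall 0 r)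

/-- `(ε, d, δ₀)`-Reifenberg flatness. -/
def ReifenbergFlat (ε : ℝ) (d : ℕ) (δ₀ : ℝ) (E : Set H) : Prop :=
  ∀ x ∈ E, ∀ r : ℝ, 0 < r → r < δ₀ →
    ∃ P : Set H, IsDPlane d P ∧ dBall x r E P ≤ ε

end

set_option linter.unusedSectionVars false
section BetaHelpers

variable {H : Type*} [NormedAddCommGroup H] [InnerProductSpace ℝ H]

lemma hContent_mono' {d : ℕ} {A B : Set H} (hAB : A ⊆ B) : hContent d A ≤ hContent d B :=
  le_iInf₂ fun t ht => iInf₂_le t (hAB.trans ht)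

lemma hContent_le_ball {d : ℕ} (hd : 1 ≤ d) {A : Set H} {x : H} {r : ℝ} (hr : 0 < r)
    (hA : A ⊆ closedBall x r) : hContent d A ≤ ENNReal.ofReal ((2 * r) ^ d) := by
  have hdpos : (0:ℝ) < (d:ℝ) := by exact_mod_cast hd.trans_lt' zero_lt_one
  have h1 : hContent d A ≤ EMetric.diam A ^ (d:ℝ) := by
    refine iInf₂_le_of_le (fun n => if n = 0 then A else ∅)
      (fun y hy => mem_iUnion.2 ⟨0, by simpa⟩) ?_
    rw [tsum_eq_single 0]
    · simp
    · intro n hn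
      simp [hn, ENNReal.zero_rpow_of_pos hdpos, EMetric.diam_empty, show d ≠ 0 by omega]
      exact Metric.ediam_empty
  refine h1.trans ?_
  have h2 : EMetric.diam A ≤ ENNReal.ofReal (2 * r) := by
    calc EMetric.diam A ≤ EMetric.diam (closedBall x r) := EMetric.diam_mono hA
    _ ≤ 2 * ENNReal.ofReal r := by
        rw [← Metric.emetric_closedBall hr.le]; exact EMetric.diam_closedBall
    _ = ENNReal.ofReal (2 * r) := by
        rw [ENNReal.ofReal_mul (by norm_num)]; norm_num
  calc EMetric.diam A ^ (d:ℝ) ≤ ENNReal.ofReal (2 * r) ^ (d:ℝ) :=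
        ENNReal.rpow_le_rpow h2 hdpos.le
  _ = ENNReal.ofReal ((2 * r) ^ d) := by
      rw [ENNReal.ofReal_rpow_of_pos (by linarith), Real.rpow_natCast]


lemma betaPl_one_le {d : ℕ} (hd : 1 ≤ d) {p : ℝ} (hp : 1 < p)
    (E : Set H) (x : H) {r : ℝ} (hr : 0 < r) (P : Set H) :
    betaPl d 1 E x r P ≤
      ENNReal.ofReal ((1 + p / (p - 1)) * 2 ^ d) * betaPl d p E x r P := by
  have hp0 : 0 < p := by linarith
  have hp1 : 0 < p - 1 := by linarith
  set h : ℝ → ℝ≥0∞ := fun t => hContent d {y | y ∈ E ∩ closedBall x r ∧ t * r < infDist y P}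
    with hh
  set Ip : ℝ≥0∞ := ∫⁻ t in Ioo (0:ℝ) 1, h t * ENNReal.ofReal (t ^ (p-1)) with hIp
  set m : ℝ := (2 * r) ^ d with hm
  have hm0 : 0 < m := by positivity
  set M : ℝ≥0∞ := ENNReal.ofReal m with hM
  have hMtop : M ≠ ⊤ := ENNReal.ofReal_ne_top
  have hhM : ∀ t : ℝ, h t ≤ M :=
    fun t => hContent_le_ball hd hr (fun y hy => hy.1.2)
  have hhtop : ∀ t : ℝ, h t ≠ ⊤ := fun t => ((hhM t).trans_lt (by simp [hM])).ne
  have hanti : Antitone h := by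
    intro s t hst
    exact hContent_mono' fun y hy =>
      ⟨hy.1, lt_of_le_of_lt (mul_le_mul_of_nonneg_right hst hr.le) hy.2⟩
  have hmeas : Measurable h := hanti.measurable
  -- β₁ in simplified form
  have hbeta1 : betaPl d 1 E x r P =
      (ENNReal.ofReal r ^ d)⁻¹ * ∫⁻ t in Ioo (0:ℝ) 1, h t := by
    rw [betaPl]
    simp only [sub_self, Real.rpow_zero, ENNReal.ofReal_one, mul_one, one_div_one,
      ENNReal.rpow_one]
    rfl
  set R : ℝ≥0∞ := ENNReal.ofReal r ^ d with hR
  have hR0 : R ≠ 0 := by simp [hR, ENNReal.ofReal_eq_zero, not_le, hr, pow_eq_zero_iff]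
  have hRtop : R ≠ ⊤ := by simp [hR, ENNReal.pow_ne_top ENNReal.ofReal_ne_top]
  have hRof : R = ENNReal.ofReal (r ^ d) := by rw [hR, ENNReal.ofReal_pow hr.le]
  -- Chebyshev
  have cheb : ∀ t₀ ∈ Ioo (0:ℝ) 1, h t₀ * ENNReal.ofReal (t₀ ^ p / p) ≤ Ip := by
    rintro t₀ ⟨ht₀0, ht₀1⟩
    have hint : ∫⁻ s in Ioo (0:ℝ) t₀, ENNReal.ofReal (s ^ (p-1)) =
        ENNReal.ofReal (t₀ ^ p / p) := by
      rw [← ofReal_integral_eq_lintegral_ofReal]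
      · congr 1
        rw [← integral_Ioc_eq_integral_Ioo, ← intervalIntegral.integral_of_le ht₀0.le,
          integral_rpow (Or.inl (by linarith))]
        rw [Real.zero_rpow (by linarith : p - 1 + 1 ≠ 0)]
        ring_nf
      · have : IntervalIntegrable (fun s : ℝ => s ^ (p-1)) volume 0 t₀ :=
          intervalIntegral.intervalIntegrable_rpow (Or.inl (by linarith))
        exact ((intervalIntegrable_iff_integrableOn_Ioc_of_le ht₀0.le).1 this).mono_set
          Ioo_subset_Ioc_self
      · filter_upwards [ae_restrict_mem measurableSet_Ioo] with s hs
        exact Real.rpow_nonneg hs.1.le _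
    calc h t₀ * ENNReal.ofReal (t₀ ^ p / p)
        = ∫⁻ s in Ioo (0:ℝ) t₀, h t₀ * ENNReal.ofReal (s ^ (p-1)) := by
          rw [lintegral_const_mul' _ _ (hhtop t₀), hint]
      _ ≤ ∫⁻ s in Ioo (0:ℝ) t₀, h s * ENNReal.ofReal (s ^ (p-1)) :=
          setLIntegral_mono' measurableSet_Ioo
            (fun s hs => mul_le_mul_left (hanti hs.2.le) _)
      _ ≤ Ip := lintegral_mono_set (Ioo_subset_Ioo le_rfl ht₀1.le)
  rcases eq_or_ne Ip ⊤ with htop | hIptop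
  · -- Ip = ⊤ : RHS is ⊤
    have : betaPl d p E x r P = ⊤ := by
      rw [betaPl, ← hIp, htop, ENNReal.mul_top (by simpa [hR] using ENNReal.inv_ne_zero.2 hRtop),
        ENNReal.top_rpow_of_pos (by positivity)]
    rw [this, ENNReal.mul_top (by positivity)]
    exact le_top
  rcases eq_or_ne Ip 0 with hzero | hIp0
  · -- Ip = 0 : LHS is 0
    have hz : ∀ t ∈ Ioo (0:ℝ) 1, h t = 0 := by
      rintro t ⟨ht0, ht1⟩
      have := (cheb t ⟨ht0, ht1⟩).trans_eq hzero
      have hne : ENNReal.ofReal (t ^ p / p) ≠ 0 := by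
        simp only [ne_eq, ENNReal.ofReal_eq_zero, not_le]
        positivity
      exact (mul_eq_zero.1 (le_antisymm this (zero_le))).resolve_right hne
    have hI1 : ∫⁻ t in Ioo (0:ℝ) 1, h t = 0 :=
      le_antisymm ((setLIntegral_mono' measurableSet_Ioo
        (fun t ht => (hz t ht).le)).trans (by simp)) (zero_le)
    rw [hbeta1, hI1, mul_zero]
    exact zero_le
  -- main case : 0 < Ip < ⊤
  set i : ℝ := Ip.toReal with hi
  have hi0 : 0 < i := ENNReal.toReal_pos hIp0 hIptop
  have hIpof : Ip = ENNReal.ofReal i := (ENNReal.ofReal_toReal hIptop).symm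
  have hRinv_mul : R⁻¹ * Ip = ENNReal.ofReal (i / r ^ d) := by
    rw [hIpof, hRof, ENNReal.ofReal_div_of_pos (by positivity), div_eq_mul_inv, mul_comm]
  have hbetap : betaPl d p E x r P = ENNReal.ofReal ((i / r ^ d) ^ (1/p)) := by
    rw [betaPl, ← hIp, ← hR, hRinv_mul, ← ENNReal.ofReal_rpow_of_pos (by positivity)]
  have hm_rd : r ^ d ≤ m := by
    rw [hm]
    exact pow_le_pow_left₀ hr.le (by linarith) d
  have hc1 : (1:ℝ) ≤ 1 + p / (p - 1) := by
    have : 0 < p / (p - 1) := by positivity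
    linarith
  by_cases him : i ≤ m
  · -- subcase i ≤ m
    set T : ℝ := (i / m) ^ (1/p) with hT
    have hT0 : 0 < T := by positivity
    have hT1 : T ≤ 1 :=
      Real.rpow_le_one (by positivity) (div_le_one_of_le₀ him hm0.le) (by positivity)
    have hsplit : ∫⁻ t in Ioo (0:ℝ) 1, h t =
        (∫⁻ t in Ioo (0:ℝ) T, h t) + ∫⁻ t in Ico T 1, h t := by
      rw [← lintegral_union measurableSet_Ico (Set.disjoint_left.2 fun t h1 h2 => absurd h2.1 (not_le.2 h1.2)),
        Ioo_union_Ico_eq_Ioo hT0 hT1]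
    have hbound1 : ∫⁻ t in Ioo (0:ℝ) T, h t ≤ M * ENNReal.ofReal T := by
      calc ∫⁻ t in Ioo (0:ℝ) T, h t ≤ ∫⁻ _ in Ioo (0:ℝ) T, M :=
            setLIntegral_mono' measurableSet_Ioo (fun t _ => hhM t)
        _ = M * ENNReal.ofReal T := by rw [setLIntegral_const, Real.volume_Ioo, sub_zero]
    have hpw : ∀ t ∈ Ico T (1:ℝ), h t ≤ Ip * ENNReal.ofReal p * ENNReal.ofReal (t ^ (-p)) := by
      rintro t ⟨htT, ht1⟩
      have ht0 : 0 < t := hT0.trans_le htT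
      have hch := cheb t ⟨ht0, ht1⟩
      have hne : ENNReal.ofReal (t ^ p / p) ≠ 0 := by
        simp only [ne_eq, ENNReal.ofReal_eq_zero, not_le]; positivity
      have hle : h t ≤ Ip / ENNReal.ofReal (t ^ p / p) :=
        (ENNReal.le_div_iff_mul_le (Or.inl hne) (Or.inl ENNReal.ofReal_ne_top)).2 hch
      refine hle.trans ?_
      rw [div_eq_mul_inv, ← ENNReal.ofReal_inv_of_pos (by positivity), mul_assoc,
        ← ENNReal.ofReal_mul hp0.le]
      apply mul_le_mul_right
      apply ENNReal.ofReal_le_ofReal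
      rw [Real.rpow_neg ht0.le, inv_div]
      exact le_of_eq (by ring)
    have hintT : ∫⁻ t in Ico T 1, ENNReal.ofReal (t ^ (-p)) ≤
        ENNReal.ofReal (T ^ (1 - p) / (p - 1)) := by
      rw [setLIntegral_congr (Ioo_ae_eq_Ico (μ := volume) (a := T) (b := 1)).symm]
      rw [← ofReal_integral_eq_lintegral_ofReal]
      · apply ENNReal.ofReal_le_ofReal
        have hnm : (0:ℝ) ∉ Set.uIcc T 1 := by
          rw [Set.uIcc_of_le hT1]
          rintro ⟨h1, h2⟩; linarith
        rw [← integral_Ioc_eq_integral_Ioo, ← intervalIntegral.integral_of_le hT1,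
          integral_rpow (Or.inr ⟨by intro hc; have := neg_injective hc; linarith, hnm⟩)]
        rw [Real.one_rpow]
        have he : (1:ℝ) ^ (-p + 1) = 1 := Real.one_rpow _
        have e3 : (1 - T ^ (-p + 1)) / (-p + 1) = (T ^ (-p + 1) - 1) / (p - 1) := by
          rw [← neg_div_neg_eq]; ring_nf
        rw [e3, show (-p + 1) = 1 - p by ring]
        gcongr
        linarith
      · have hii : IntervalIntegrable (fun s : ℝ => s ^ (-p)) volume T 1 :=
          intervalIntegral.intervalIntegrable_rpow (Or.inr (by
            rw [Set.uIcc_of_le hT1]; rintro ⟨h1, h2⟩; linarith))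
        exact ((intervalIntegrable_iff_integrableOn_Ioc_of_le hT1).1 hii).mono_set
          Ioo_subset_Ioc_self
      · filter_upwards [ae_restrict_mem measurableSet_Ioo] with s hs
        exact Real.rpow_nonneg (hT0.trans hs.1).le _
    have hbound2 : ∫⁻ t in Ico T 1, h t ≤
        Ip * ENNReal.ofReal p * ENNReal.ofReal (T ^ (1 - p) / (p - 1)) := by
      calc ∫⁻ t in Ico T 1, h t
          ≤ ∫⁻ t in Ico T 1, Ip * ENNReal.ofReal p * ENNReal.ofReal (t ^ (-p)) := by
            refine setLIntegral_mono' measurableSet_Ico fun t ht => ?_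
            rw [mul_assoc] at *
            exact (hpw t ht).trans (le_of_eq (by rw [mul_assoc]))
        _ = Ip * ENNReal.ofReal p * ∫⁻ t in Ico T 1, ENNReal.ofReal (t ^ (-p)) :=
            lintegral_const_mul' _ _ (ENNReal.mul_ne_top hIptop ENNReal.ofReal_ne_top)
        _ ≤ _ := mul_le_mul_right hintT _
    have hiT : i * T ^ (1 - p) = m * T := by
      have e1 : T ^ (1 - p) = (i / m) ^ ((1 / p) * (1 - p)) := by
        rw [hT, ← Real.rpow_mul (by positivity)]
      have e2 : (i / m) ^ ((1 / p) * (1 - p)) = (i / m) ^ (1 / p) / (i / m) := by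
        rw [show (1 / p) * (1 - p) = 1 / p - 1 by field_simp, Real.rpow_sub (by positivity),
          Real.rpow_one]
      rw [e1, e2, ← hT]
      field_simp
    have hI1 : ∫⁻ t in Ioo (0:ℝ) 1, h t ≤
        ENNReal.ofReal ((1 + p / (p - 1)) * (m * T)) := by
      rw [hsplit]
      have hTp : (0:ℝ) ≤ T ^ (1 - p) / (p - 1) := by positivity
      calc (∫⁻ t in Ioo (0:ℝ) T, h t) + ∫⁻ t in Ico T 1, h t
          ≤ M * ENNReal.ofReal T + Ip * ENNReal.ofReal p * ENNReal.ofReal (T ^ (1-p) / (p-1)) :=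
            add_le_add hbound1 hbound2
        _ = ENNReal.ofReal (m * T) + ENNReal.ofReal (i * (p * (T ^ (1-p) / (p-1)))) := by
            rw [hM, hIpof, ← ENNReal.ofReal_mul hm0.le, ← ENNReal.ofReal_mul hi0.le,
              ← ENNReal.ofReal_mul (by positivity : (0:ℝ) ≤ i * p)]
            rw [mul_assoc]
        _ = ENNReal.ofReal (m * T + p / (p - 1) * (m * T)) := by
            rw [← ENNReal.ofReal_add (by positivity) (by positivity)]
            congr 1
            have : i * (p * (T ^ (1-p) / (p-1))) = p / (p-1) * (i * T ^ (1-p)) := by ring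
            rw [this, hiT]
        _ = ENNReal.ofReal ((1 + p / (p - 1)) * (m * T)) := by ring_nf
    have hdivR : ∀ z : ℝ, R⁻¹ * ENNReal.ofReal z = ENNReal.ofReal (z / r ^ d) := by
      intro z
      rw [hRof, ENNReal.ofReal_div_of_pos (by positivity), ENNReal.div_eq_inv_mul]
    rw [hbeta1, hbetap]
    calc R⁻¹ * ∫⁻ t in Ioo (0:ℝ) 1, h t
        ≤ R⁻¹ * ENNReal.ofReal ((1 + p / (p - 1)) * (m * T)) := mul_le_mul_right hI1 _
      _ = ENNReal.ofReal ((1 + p / (p - 1)) * (m * T) / r ^ d) := hdivR _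
      _ ≤ ENNReal.ofReal ((1 + p / (p - 1)) * 2 ^ d * ((i / r ^ d) ^ (1 / p))) := by
          apply ENNReal.ofReal_le_ofReal
          have hmd : m = 2 ^ d * r ^ d := by rw [hm, mul_pow]
          have hTle : (i / m) ^ (1 / p) ≤ (i / r ^ d) ^ (1 / p) := by
            apply Real.rpow_le_rpow (by positivity) _ (by positivity)
            apply div_le_div_of_nonneg_left hi0.le (by positivity) hm_rd
          have heq : (1 + p / (p - 1)) * (m * T) / r ^ d =
              (1 + p / (p - 1)) * 2 ^ d * ((i / m) ^ (1 / p)) := by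
            rw [hT, hmd]; field_simp
          rw [heq]
          exact mul_le_mul_of_nonneg_left hTle (by positivity)
      _ = ENNReal.ofReal ((1 + p / (p - 1)) * 2 ^ d) *
            ENNReal.ofReal ((i / r ^ d) ^ (1 / p)) := ENNReal.ofReal_mul (by positivity)
  · -- subcase m < i
    push_neg at him
    have hI1 : ∫⁻ t in Ioo (0:ℝ) 1, h t ≤ M := by
      calc ∫⁻ t in Ioo (0:ℝ) 1, h t ≤ ∫⁻ _ in Ioo (0:ℝ) 1, M :=
            setLIntegral_mono' measurableSet_Ioo fun t _ => hhM t
        _ = M := by rw [setLIntegral_const, Real.volume_Ioo]; norm_num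
    have hdivR : ∀ z : ℝ, R⁻¹ * ENNReal.ofReal z = ENNReal.ofReal (z / r ^ d) := by
      intro z
      rw [hRof, ENNReal.ofReal_div_of_pos (by positivity), ENNReal.div_eq_inv_mul]
    have h2d : (1:ℝ) ≤ (i / r ^ d) ^ (1 / p) := by
      have h1 : (1:ℝ) ≤ i / r ^ d := by
        rw [le_div_iff₀ (by positivity)]
        nlinarith
      calc (1:ℝ) = 1 ^ (1/p) := (Real.one_rpow _).symm
        _ ≤ (i / r ^ d) ^ (1/p) := Real.rpow_le_rpow (by norm_num) h1 (by positivity)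
    rw [hbeta1, hbetap]
    calc R⁻¹ * ∫⁻ t in Ioo (0:ℝ) 1, h t
        ≤ R⁻¹ * M := mul_le_mul_right hI1 _
      _ = ENNReal.ofReal (m / r ^ d) := hdivR _
      _ ≤ ENNReal.ofReal ((1 + p / (p - 1)) * 2 ^ d) := by
          apply ENNReal.ofReal_le_ofReal
          have hmd : m = 2 ^ d * r ^ d := by rw [hm, mul_pow]
          rw [hmd, mul_div_assoc, div_self (by positivity : (r:ℝ) ^ d ≠ 0), mul_one]
          nlinarith [pow_pos (by norm_num : (0:ℝ) < 2) d]
      _ ≤ ENNReal.ofReal ((1 + p / (p - 1)) * 2 ^ d) *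
            ENNReal.ofReal ((i / r ^ d) ^ (1 / p)) := by
          nth_rewrite 1 [← mul_one (ENNReal.ofReal ((1 + p / (p - 1)) * 2 ^ d))]
          exact mul_le_mul_right (ENNReal.one_le_ofReal.2 h2d) _

end BetaHelpers

/-- **Lemma 2.6.** For `1 ≤ p < ∞` there is a constant `C` (depending only on `d` and `p`)
such that for any `E ⊆ H` and any ball `B = B(x,r)` centred on `E` with
`𝓗^d_∞(E ∩ B) > 0`, one has `β_E^{d,1}(B) ≤ C β_E^{d,p}(B)`. -/
theorem beta_one_le_beta_p
    {H : Type*} [NormedAddCommGroup H] [InnerProductSpace ℝ H]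
    [CompleteSpace H] [TopologicalSpace.SeparableSpace H]
    (d : ℕ) (hd : 1 ≤ d) (p : ℝ) (hp : 1 ≤ p) :
    ∃ C : ℝ, 0 < C ∧
      ∀ (E : Set H) (x : H) (r : ℝ), x ∈ E → 0 < r →
        hContent d (E ∩ closedBall x r) ≠ 0 →
        betaInf d 1 E x r ≤ ENNReal.ofReal C * betaInf d p E x r := by
  rcases eq_or_lt_of_le hp with hp1 | hp1
  · subst hp1
    exact ⟨1, one_pos, fun E x r _ _ _ => by simp⟩
  · have hpd : (0:ℝ) < p / (p - 1) := div_pos (by linarith) (by linarith)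
    have hC0 : (0:ℝ) < (1 + p / (p - 1)) * 2 ^ d := by positivity
    refine ⟨(1 + p / (p - 1)) * 2 ^ d, hC0, fun E x r _ hr _ => ?_⟩
    set c := ENNReal.ofReal ((1 + p / (p - 1)) * 2 ^ d) with hc
    have hc0 : c ≠ 0 := by simp [hc, hC0.le, hC0]
    have hct : c ≠ ⊤ := ENNReal.ofReal_ne_top
    rw [mul_comm, ← ENNReal.div_le_iff_le_mul (Or.inl hc0) (Or.inl hct)]
    refine le_iInf₂ fun P hP => ?_
    rw [ENNReal.div_le_iff_le_mul (Or.inl hc0) (Or.inl hct), mul_comm]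
    exact (iInf₂_le P hP).trans (betaPl_one_le hd hp1 E x hr P)
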